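/- There is a model category structure on the category rPres of reflexive presentations in which the weak equivalences are the morphisms f : P → Q such that ⟦f⟧ : ⟦P⟧ → ⟦Q⟧ is an isomorphism of presented monoids, the cofibrations are llp(rlp(I)), and the fibrations are the morphisms with the right lifting property with respect to all trivial cofibrations (cofibrations that are weak equivalences). -/

import Mathlib

/-- A presentation of a monoid: a type of generators and a set of relations
between words (elements of the free monoid) over the generators. -/
structure MonPres : Type 1 where
  gen : Type
  rel : Set (FreeMonoid gen × FreeMonoid gen)

namespace MonPres

/-- The congruence on the free monoid generated by the relations. -/
def con (P : MonPres) : Con (FreeMonoid P.gen) :=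
  conGen fun u v => (u, v) ∈ P.rel

/-- The monoid presented by a presentation. -/
abbrev Presented (P : MonPres) : Type := P.con.Quotient

end MonPres

/-- A morphism of presentations. -/
structure MonPresHom (P Q : MonPres) where
  toFun : P.gen → Q.gen
  map_rel : ∀ p ∈ P.rel,
    (FreeMonoid.map toFun p.1, FreeMonoid.map toFun p.2) ∈ Q.rel

namespace MonPresHom

/-- The monoid homomorphism induced on presented monoids. -/
def induced {P Q : MonPres} (f : MonPresHom P Q) : P.Presented →* Q.Presented :=
  Con.lift P.con ((Con.mk' Q.con).comp (FreeMonoid.map f.toFun)) (by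
    refine Con.conGen_le.mpr ?_
    intro x y hxy
    simp only [Con.ker_rel, MonoidHom.comp_apply, Con.coe_mk']
    exact (Con.eq _).mpr (ConGen.Rel.of _ _ (f.map_rel (x, y) hxy)))

/-- Identity morphism of presentations. -/
def id (P : MonPres) : MonPresHom P P where
  toFun := _root_.id
  map_rel := by intro p hp; simpa using hp

/-- Composition of morphisms of presentations. -/
def comp {P Q R : MonPres} (g : MonPresHom Q R) (f : MonPresHom P Q) :
    MonPresHom P R where
  toFun := g.toFun ∘ f.toFun
  map_rel := by
    intro p hp
    have h := g.map_rel _ (f.map_rel p hp)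
    simpa [FreeMonoid.map_comp] using h

end MonPresHom

/-- The standard presentation of a monoid `M`: generators are the elements of
`M`, and relations are all pairs of words whose products in `M` coincide. -/
def stdPres (M : Type) [Monoid M] : MonPres where
  gen := M
  rel := {p | FreeMonoid.lift (id : M → M) p.1 = FreeMonoid.lift (id : M → M) p.2}
open CategoryTheory

/-- A reflexive presentation: every word is related to itself. -/
structure RPres : Type 1 where
  pres : MonPres
  refl : ∀ u : FreeMonoid pres.gen, (u, u) ∈ pres.rel

/-- The category of reflexive presentations and morphisms of presentations. -/
instance : Category RPres where
  Hom P Q := MonPresHom P.pres Q.pres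
  id P := MonPresHom.id P.pres
  comp f g := g.comp f
  id_comp _ := rfl
  comp_id _ := rfl
  assoc _ _ _ := rfl

/-- The reflexive presentation on a type of generators with no relations
besides the reflexivity ones. -/
def rpresDiag (α : Type) : RPres :=
  ⟨⟨α, Set.diagonal _⟩, fun _ => rfl⟩

/-- The word `a₁ … a_m` in the free monoid on `Fin (m + n)`. -/
def leftWord (m n : ℕ) : FreeMonoid (Fin (m + n)) :=
  FreeMonoid.ofList (List.ofFn fun i : Fin m => Fin.castAdd n i)

/-- The word `a_{m+1} … a_{m+n}` in the free monoid on `Fin (m + n)`. -/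
def rightWord (m n : ℕ) : FreeMonoid (Fin (m + n)) :=
  FreeMonoid.ofList (List.ofFn fun i : Fin n => Fin.natAdd m i)

/-- The reflexive presentation on `m + n` generators with one extra relation
`a₁ … a_m → a_{m+1} … a_{m+n}`. -/
def rpresRel (m n : ℕ) : RPres :=
  ⟨⟨Fin (m + n), insert (leftWord m n, rightWord m n) (Set.diagonal _)⟩,
    fun _ => Set.mem_insert_iff.mpr (Or.inr rfl)⟩

/-- The generating cofibration `∅ → ⟨a | ⟩`. -/
def iGen : rpresDiag Empty ⟶ rpresDiag PUnit where
  toFun := fun x => x.elim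
  map_rel := by rintro ⟨u, v⟩ (h : u = v); subst h; exact rfl

/-- The generating cofibration `⟨a₁,…,a_{m+n} | ⟩ → R^{m,n}`. -/
def iRel (m n : ℕ) : rpresDiag (Fin (m + n)) ⟶ rpresRel m n where
  toFun := _root_.id
  map_rel := by
    rintro ⟨u, v⟩ (h : u = v); subst h
    exact Set.mem_insert_iff.mpr (Or.inr rfl)

/-- The class `I` of generating cofibrations. -/
inductive IClass : ∀ ⦃X Y : RPres⦄, (X ⟶ Y) → Prop
  | g : IClass iGen
  | r (m n : ℕ) : IClass (iRel m n)

/-- The class `rlp(I)` of trivial fibrations. -/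
def RlpI : MorphismProperty RPres := fun _ _ p =>
  ∀ ⦃A B : RPres⦄ (i : A ⟶ B), IClass i → HasLiftingProperty i p

/-- The class `llp(rlp(I))` of cofibrations. -/
def Cofib : MorphismProperty RPres := fun _ _ f =>
  ∀ ⦃X Y : RPres⦄ (p : X ⟶ Y), RlpI p → HasLiftingProperty f p

/-- The weak equivalences: morphisms inducing an isomorphism of presented
monoids. -/
def Weq : MorphismProperty RPres := fun _ _ f =>
  Function.Bijective (MonPresHom.induced f)

/-- The fibrations: morphisms with the right lifting property with respect to
all trivial cofibrations. -/
def Fib : MorphismProperty RPres := fun _ _ p =>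
  ∀ ⦃A B : RPres⦄ (i : A ⟶ B), Cofib i → Weq i → HasLiftingProperty i p

/-- A weak factorization system: the two classes determine each other by
lifting properties, and every morphism factors accordingly. -/
structure IsWFS (L R : MorphismProperty RPres) : Prop where
  lift : ∀ ⦃A B X Y : RPres⦄ (i : A ⟶ B) (p : X ⟶ Y), L i → R p →
    HasLiftingProperty i p
  llp : ∀ ⦃A B : RPres⦄ (i : A ⟶ B),
    (∀ ⦃X Y : RPres⦄ (p : X ⟶ Y), R p → HasLiftingProperty i p) → L i
  rlp : ∀ ⦃X Y : RPres⦄ (p : X ⟶ Y),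
    (∀ ⦃A B : RPres⦄ (i : A ⟶ B), L i → HasLiftingProperty i p) → R p
  factor : ∀ ⦃X Y : RPres⦄ (f : X ⟶ Y),
    ∃ (Z : RPres) (i : X ⟶ Z) (p : Z ⟶ Y), L i ∧ R p ∧ i ≫ p = f

/-!
A morphism has the right lifting property against `I` exactly when it is surjective on
generators and reflects relations; such a morphism has a section inducing an inverse on presented
monoids, and it lifts against every morphism injective on generators. So the cofibrations are
the morphisms injective on generators, and `f : X ⟶ Y` factors as a cofibration followed by a
trivial fibration through the generators `X ⊕ Y` with the relations pulled back from `Y`.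

For the other factorization, adjoin to `X` letters `(y, m)` lying over `y : Y` and standing for
`m ∈ ⟦X⟧`, two words being related when they have the same value in `⟦X⟧` and related images in
`Y`. Adjoining all such letters would change the presented monoid, since a letter is tied to `X`
only through the relations of `Y`; so one adjoins the union `K` of all saturated families, those
whose letters are all congruent to words in `X`. Then `X ⟶ Z` is a trivial cofibration. Against
a trivial cofibration `A ⟶ B`, a lift sends a generator `b` to the letter over its image in `Y`
standing for its value transported along `⟦A⟧ ≅ ⟦B⟧`; together with `K` these letters form a
saturated family, so they already lie in `K`, and `Z ⟶ Y` is a fibration. The remaining lifting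
conditions follow from the two factorizations by retract arguments.
-/

theorem Function.Injective.extend_induction {α β γ : Type*} {f : α → β}
    (hf : Function.Injective f) {g : α → γ} {e : β → γ} {P : β → γ → Prop}
    (hg : ∀ a, P (f a) (g a)) (he : ∀ b, P b (e b)) (b : β) : P b (Function.extend f g e b) := by
  by_cases hb : ∃ a, f a = b
  · obtain ⟨a, rfl⟩ := hb
    rw [hf.extend_apply]
    exact hg a
  · rw [Function.extend_apply' _ _ _ hb]
    exact he b

theorem map_map_mem_of_map_mem {α β γ : Type} {g : β → γ} {f : α → β} {k : α → γ}
    {u v : FreeMonoid α} {R : Set (FreeMonoid γ × FreeMonoid γ)} (hk : ∀ x, g (f x) = k x)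
    (h : (FreeMonoid.map k u, FreeMonoid.map k v) ∈ R) :
    (FreeMonoid.map g (FreeMonoid.map f u), FreeMonoid.map g (FreeMonoid.map f v)) ∈ R := by
  rwa [FreeMonoid.map_map, FreeMonoid.map_map, show g ∘ f = k from funext hk]

namespace MonPresHom

theorem ext {P Q : MonPres} {f g : MonPresHom P Q} (h : f.toFun = g.toFun) : f = g := by
  cases f; cases g; cases h; rfl

end MonPresHom

namespace MonPres

theorem surjective_of_forall_mem_range {P : MonPres} {M : Type*} [Monoid M]
    (φ : M →* P.Presented) (h : ∀ x, Con.mk' P.con (.of x) ∈ Set.range φ) :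
    Function.Surjective φ := by
  intro z
  induction z using Con.induction_on with | H w => ?_
  induction w using FreeMonoid.inductionOn' with
  | one => exact ⟨1, map_one φ⟩
  | of_mul x w ih =>
    obtain ⟨m, hm⟩ := h x
    obtain ⟨m', hm'⟩ := ih
    exact ⟨m * m', by rw [map_mul, hm, hm']; rfl⟩

end MonPres

namespace RPres

theorem hom_ext {X Y : RPres} {f g : X ⟶ Y} (h : ∀ x, f.toFun x = g.toFun x) : f = g :=
  MonPresHom.ext (funext h)

def diagHom {α : Type} (P : RPres) (f : α → P.pres.gen) : rpresDiag α ⟶ P :=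
  ⟨f, by rintro ⟨u, v⟩ (rfl : u = v); exact P.refl _⟩

theorem comp_toFun {X Y Z : RPres} (f : X ⟶ Y) (g : Y ⟶ Z) :
    (f ≫ g).toFun = g.toFun ∘ f.toFun := rfl

theorem induced_comp {X Y Z : RPres} (f : X ⟶ Y) (g : Y ⟶ Z) :
    MonPresHom.induced (f ≫ g) = (MonPresHom.induced g).comp (MonPresHom.induced f) := by
  ext; rfl

theorem induced_id (X : RPres) : MonPresHom.induced (𝟙 X) = MonoidHom.id _ := by
  ext; rfl

end RPres

theorem weq_comp {X Y Z : RPres} {f : X ⟶ Y} {g : Y ⟶ Z} (hf : Weq f) (hg : Weq g) :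
    Weq (f ≫ g) := by
  simpa only [Weq, RPres.induced_comp, MonoidHom.coe_comp] using hg.comp hf

theorem weq_of_weq_comp_left {X Y Z : RPres} {f : X ⟶ Y} {g : Y ⟶ Z} (hg : Weq g)
    (hfg : Weq (f ≫ g)) : Weq f := by
  simpa only [Weq, RPres.induced_comp, MonoidHom.coe_comp, hg.of_comp_iff'] using hfg

theorem weq_of_weq_comp_right {X Y Z : RPres} {f : X ⟶ Y} {g : Y ⟶ Z} (hf : Weq f)
    (hfg : Weq (f ≫ g)) : Weq g := by
  simpa only [Weq, RPres.induced_comp, MonoidHom.coe_comp, Function.Bijective.of_comp_iff _ hf]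
    using hfg

namespace RPres

open Limits

def genFunctor : RPres ⥤ Type where
  obj P := P.pres.gen
  map f := TypeCat.ofHom f.toFun

variable {J : Type} [SmallCategory J] (F : J ⥤ RPres)

def limitObj : RPres :=
  ⟨⟨(F ⋙ genFunctor).sections,
    {uv | ∀ j, (FreeMonoid.map (fun s : (F ⋙ genFunctor).sections => s.1 j) uv.1,
      FreeMonoid.map (fun s : (F ⋙ genFunctor).sections => s.1 j) uv.2) ∈ (F.obj j).pres.rel}⟩,
    fun _ j => (F.obj j).refl _⟩

def limitCone : Cone F where
  pt := limitObj F
  π :=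
    { app j := ⟨fun s : (F ⋙ genFunctor).sections => s.1 j, fun _ h => h j⟩
      naturality _ _ φ := hom_ext fun s => (s.2 φ).symm }

def limitConeIsLimit : IsLimit (limitCone F) where
  lift s :=
    { toFun x := ⟨fun j => (s.π.app j).toFun x,
        fun φ => congrFun (congrArg MonPresHom.toFun (s.π.naturality φ)).symm x⟩
      map_rel := by
        rintro ⟨u, v⟩ huv j
        exact map_map_mem_of_map_mem (fun _ => rfl) ((s.π.app j).map_rel _ huv) }
  uniq s m hm := hom_ext fun x => Subtype.ext <| funext fun j =>
    congrFun (congrArg MonPresHom.toFun (hm j)) x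

noncomputable def colimitObj : RPres :=
  ⟨⟨colimit (F ⋙ genFunctor),
    Set.diagonal _ ∪ ⋃ j, Prod.map (FreeMonoid.map (colimit.ι (F ⋙ genFunctor) j))
      (FreeMonoid.map (colimit.ι (F ⋙ genFunctor) j)) '' (F.obj j).pres.rel⟩,
    fun _ => Or.inl rfl⟩

noncomputable def colimitCocone : Cocone F where
  pt := colimitObj F
  ι :=
    { app j := ⟨colimit.ι (F ⋙ genFunctor) j,
        fun uv h => Or.inr (Set.mem_iUnion.2 ⟨j, uv, h, rfl⟩)⟩
      naturality _ _ φ := hom_ext fun x =>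
        congrArg (fun h => h x) (colimit.w (F ⋙ genFunctor) φ) }

noncomputable def colimitCoconeIsColimit : IsColimit (colimitCocone F) where
  desc s :=
    { toFun := colimit.desc (F ⋙ genFunctor) (genFunctor.mapCocone s)
      map_rel := by
        rintro ⟨u, v⟩ ((rfl : u = v) | h)
        · exact s.pt.refl _
        · obtain ⟨j, ⟨u, v⟩, huv, he⟩ := Set.mem_iUnion.1 h
          cases he
          exact map_map_mem_of_map_mem
            (fun x => congrArg (fun h => h x) (colimit.ι_desc (genFunctor.mapCocone s) j))
            ((s.ι.app j).map_rel _ huv) }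
  fac s j := hom_ext fun x => congrArg (fun h => h x) (colimit.ι_desc (genFunctor.mapCocone s) j)
  uniq s m hm := hom_ext fun x => by
    obtain ⟨j, y, rfl⟩ := Types.jointly_surjective' (F := F ⋙ genFunctor) x
    exact (congrFun (congrArg MonPresHom.toFun (hm j)) y).trans
      (congrArg (fun h => h y) (colimit.ι_desc (genFunctor.mapCocone s) j)).symm

instance : HasLimits RPres :=
  ⟨fun _ _ => ⟨fun F => ⟨_, limitConeIsLimit F⟩⟩⟩

instance : HasColimits RPres :=
  ⟨fun _ _ => ⟨fun F => ⟨_, colimitCoconeIsColimit F⟩⟩⟩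

end RPres

theorem hasLiftingProperty_iff {A B X Y : RPres} (i : A ⟶ B) (p : X ⟶ Y) :
    HasLiftingProperty i p ↔ ∀ (f : A ⟶ X) (g : B ⟶ Y), f ≫ p = i ≫ g →
      ∃ l : B ⟶ X, i ≫ l = f ∧ l ≫ p = g := by
  refine ⟨fun h f g w => ?_, fun h => ⟨fun {f g} sq => ?_⟩⟩
  · obtain ⟨⟨⟨l, h₁, h₂⟩⟩⟩ := h.sq_hasLift (CommSq.mk w)
    exact ⟨l, h₁, h₂⟩
  · obtain ⟨l, h₁, h₂⟩ := h f g sq.w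
    exact ⟨⟨⟨l, h₁, h₂⟩⟩⟩

theorem exists_map_leftWord_rightWord {α : Type} (u v : FreeMonoid α) :
    ∃ (m n : ℕ) (g : Fin (m + n) → α),
      FreeMonoid.map g (leftWord m n) = u ∧ FreeMonoid.map g (rightWord m n) = v := by
  refine ⟨_, _, Fin.append u.toList.get v.toList.get, ?_, ?_⟩ <;>
  · apply FreeMonoid.toList.injective
    simp [leftWord, rightWord, FreeMonoid.toList_map, List.map_ofFn, Function.comp_def]

def ReflectsRel {X Y : RPres} (p : X ⟶ Y) : Prop :=
  ∀ u v : FreeMonoid X.pres.gen,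
    (FreeMonoid.map p.toFun u, FreeMonoid.map p.toFun v) ∈ Y.pres.rel → (u, v) ∈ X.pres.rel

theorem hasLiftingProperty_of_injective_of_surjective {A B X Y : RPres} {i : A ⟶ B} {p : X ⟶ Y}
    (hi : Function.Injective i.toFun) (hp : Function.Surjective p.toFun) (hr : ReflectsRel p) :
    HasLiftingProperty i p := by
  refine (hasLiftingProperty_iff i p).2 fun f g w => ?_
  have hw : ∀ a, p.toFun (f.toFun a) = g.toFun (i.toFun a) :=
    congrFun (congrArg MonPresHom.toFun w)
  choose s hs using hp
  let l := Function.extend i.toFun f.toFun (s ∘ g.toFun)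
  have hpl : p.toFun ∘ l = g.toFun := funext <|
    hi.extend_induction (P := fun b x => p.toFun x = g.toFun b) hw fun b => hs _
  refine ⟨⟨l, fun uv huv => hr _ _ ?_⟩, MonPresHom.ext (Function.extend_comp hi _ _),
    MonPresHom.ext hpl⟩
  simpa only [FreeMonoid.map_map, hpl] using g.map_rel uv huv

theorem rlpI_of_surjective_of_reflectsRel {X Y : RPres} {p : X ⟶ Y}
    (hp : Function.Surjective p.toFun) (hr : ReflectsRel p) : RlpI p := by
  rintro A B i (_ | ⟨m, n⟩)
  · exact hasLiftingProperty_of_injective_of_surjective (fun a => a.elim) hp hr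
  · exact hasLiftingProperty_of_injective_of_surjective (fun _ _ h => h) hp hr

theorem RlpI.surjective {X Y : RPres} {p : X ⟶ Y} (hp : RlpI p) :
    Function.Surjective p.toFun := by
  intro y
  obtain ⟨l, -, hl⟩ := (hasLiftingProperty_iff _ _).1 (hp iGen .g)
    (X.diagHom fun e => e.elim) (Y.diagHom fun _ => y) (RPres.hom_ext fun e => e.elim)
  exact ⟨l.toFun PUnit.unit, congrFun (congrArg MonPresHom.toFun hl) PUnit.unit⟩

theorem RlpI.reflectsRel {X Y : RPres} {p : X ⟶ Y} (hp : RlpI p) : ReflectsRel p := by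
  intro u v huv
  obtain ⟨m, n, g, rfl, rfl⟩ := exists_map_leftWord_rightWord u v
  let bot : rpresRel m n ⟶ Y := ⟨p.toFun ∘ g, by
    rintro ⟨u, v⟩ (h | (rfl : u = v))
    · cases h
      rw [FreeMonoid.map_map, FreeMonoid.map_map] at huv
      exact huv
    · exact Y.refl _⟩
  obtain ⟨l, hl, -⟩ := (hasLiftingProperty_iff _ _).1 (hp _ (.r m n)) (X.diagHom g) bot rfl
  have hlg : l.toFun = g := congrArg MonPresHom.toFun hl
  have hrel := l.map_rel _ (Set.mem_insert _ _)
  rw [hlg] at hrel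
  exact hrel

theorem weq_of_surjective_of_reflectsRel {X Y : RPres} {p : X ⟶ Y}
    (hp : Function.Surjective p.toFun) (hr : ReflectsRel p) : Weq p := by
  choose s hs using hp
  have hps : p.toFun ∘ s = id := funext hs
  let σ : Y ⟶ X := ⟨s, fun uv huv => hr _ _ (by simpa only [FreeMonoid.map_map, hps,
    FreeMonoid.map_id, MonoidHom.id_apply] using huv)⟩
  have hσp : MonPresHom.induced (σ ≫ p) = MonoidHom.id _ := by
    rw [show σ ≫ p = 𝟙 Y from RPres.hom_ext hs, RPres.induced_id]
  have hpσ : MonPresHom.induced (p ≫ σ) = MonoidHom.id _ := by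
    ext x
    refine (Con.eq _).2 (ConGen.Rel.of _ _ (hr _ _ ?_))
    simp only [FreeMonoid.map_of, RPres.comp_toFun, Function.comp_apply]
    exact (hs (p.toFun x)).symm ▸ Y.refl _
  rw [RPres.induced_comp] at hσp hpσ
  exact Function.bijective_iff_has_inverse.2
    ⟨σ.induced, DFunLike.congr_fun hpσ, DFunLike.congr_fun hσp⟩

theorem cofib_of_injective {A B : RPres} {i : A ⟶ B} (hi : Function.Injective i.toFun) :
    Cofib i :=
  fun _ _ _ hp => hasLiftingProperty_of_injective_of_surjective hi hp.surjective hp.reflectsRel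

def RPres.chaotic (α : Type) : RPres := ⟨⟨α, Set.univ⟩, fun _ => trivial⟩

def RPres.toChaotic (P : RPres) {α : Type} (f : P.pres.gen → α) : P ⟶ RPres.chaotic α :=
  ⟨f, fun _ _ => trivial⟩

theorem Cofib.injective {A B : RPres} {i : A ⟶ B} (hi : Cofib i) :
    Function.Injective i.toFun := by
  intro a b hab
  let p := (RPres.chaotic A.pres.gen).toChaotic fun _ => PUnit.unit
  have hp : RlpI p := rlpI_of_surjective_of_reflectsRel (fun _ => ⟨a, rfl⟩) fun _ _ _ => trivial
  obtain ⟨l, hl, -⟩ := (hasLiftingProperty_iff _ _).1 (hi p hp) (A.toChaotic id)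
    (B.toChaotic fun _ => PUnit.unit) rfl
  have hli : ∀ a, l.toFun (i.toFun a) = a := congrFun (congrArg MonPresHom.toFun hl)
  rw [← hli a, ← hli b, hab]

theorem IClass.cofib {A B : RPres} {i : A ⟶ B} (hi : IClass i) : Cofib i := by
  cases hi with
  | g => exact cofib_of_injective fun a => a.elim
  | r m n => exact cofib_of_injective fun _ _ h => h

namespace MappingCylinder

variable {X Y : RPres} (f : X ⟶ Y)

abbrev obj : RPres :=
  ⟨⟨X.pres.gen ⊕ Y.pres.gen, {uv | (FreeMonoid.map (Sum.elim f.toFun id) uv.1,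
    FreeMonoid.map (Sum.elim f.toFun id) uv.2) ∈ Y.pres.rel}⟩, fun _ => Y.refl _⟩

theorem map_inl_mem_rel {u v : FreeMonoid X.pres.gen}
    (h : (FreeMonoid.map f.toFun u, FreeMonoid.map f.toFun v) ∈ Y.pres.rel) :
    (FreeMonoid.map Sum.inl u, FreeMonoid.map Sum.inl v) ∈ (obj f).pres.rel := by
  simpa only [Set.mem_ofPred_eq, FreeMonoid.map_map, Sum.elim_comp_inl] using h

def ι : X ⟶ obj f := ⟨Sum.inl, fun uv huv => map_inl_mem_rel f (f.map_rel uv huv)⟩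

def π : obj f ⟶ Y := ⟨Sum.elim f.toFun id, fun _ h => h⟩

theorem ι_π : ι f ≫ π f = f := rfl

theorem rlpI_π : RlpI (π f) :=
  rlpI_of_surjective_of_reflectsRel (fun y => ⟨Sum.inr y, rfl⟩) fun _ _ h => h

theorem cofib_ι : Cofib (ι f) := cofib_of_injective Sum.inl_injective

end MappingCylinder

open MappingCylinder in
theorem rlpI_of_fib_of_weq {X Y : RPres} {p : X ⟶ Y} (hf : Fib p) (hw : Weq p) : RlpI p := by
  -- `p` is a retract of the trivial fibration `π p`.
  have hι : Weq (ι p) := weq_of_weq_comp_left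
    (weq_of_surjective_of_reflectsRel (rlpI_π p).surjective (rlpI_π p).reflectsRel) hw
  obtain ⟨r, hιr, hrp⟩ := (hasLiftingProperty_iff _ _).1 (hf _ (cofib_ι p) hι) (𝟙 X) (π p) rfl
  have hri : ∀ x, r.toFun (Sum.inl x) = x := congrFun (congrArg MonPresHom.toFun hιr)
  have hrp' : ∀ z, p.toFun (r.toFun z) = (π p).toFun z := congrFun (congrArg MonPresHom.toFun hrp)
  refine rlpI_of_surjective_of_reflectsRel (fun y => ⟨r.toFun (Sum.inr y), hrp' _⟩)
    fun u v huv => ?_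
  have hrel := r.map_rel _ (map_inl_mem_rel p huv)
  simpa only [FreeMonoid.map_map, show r.toFun ∘ Sum.inl = id from funext hri,
    FreeMonoid.map_id, MonoidHom.id_apply] using hrel

theorem fib_and_weq_iff_rlpI {X Y : RPres} (p : X ⟶ Y) : Fib p ∧ Weq p ↔ RlpI p :=
  ⟨fun h => rlpI_of_fib_of_weq h.1 h.2, fun h =>
    ⟨fun _ _ _ hi _ => hi p h, weq_of_surjective_of_reflectsRel h.surjective h.reflectsRel⟩⟩

theorem cofib_and_weq_of_retract {A B Z : RPres} {i : A ⟶ B} {j : A ⟶ Z} {l : B ⟶ Z}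
    {p : Z ⟶ B} (hil : i ≫ l = j) (hlp : l ≫ p = 𝟙 B) (hj : Cofib j) (hj' : Weq j) :
    Cofib i ∧ Weq i := by
  have hlp' : (MonPresHom.induced p).comp (MonPresHom.induced l) = MonoidHom.id _ := by
    rw [← RPres.induced_comp, hlp, RPres.induced_id]
  have hl : Weq l := by
    refine ⟨Function.LeftInverse.injective (g := MonPresHom.induced p) (DFunLike.congr_fun hlp'),
      Function.Surjective.of_comp (g := MonPresHom.induced i) ?_⟩
    rw [← MonoidHom.coe_comp, ← RPres.induced_comp, hil]
    exact hj'.2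
  refine ⟨cofib_of_injective (Function.Injective.of_comp (f := l.toFun) ?_),
    weq_of_weq_comp_left hl (hil ▸ hj')⟩
  rw [← RPres.comp_toFun, hil]
  exact hj.injective

namespace Redundant

variable {X Y : RPres} (f : X ⟶ Y) (S : Set (Y.pres.gen × X.pres.Presented))

def θ : X.pres.gen ⊕ S → X.pres.Presented :=
  Sum.elim (fun x => Con.mk' X.pres.con (.of x)) fun s => s.1.2

def q : X.pres.gen ⊕ S → Y.pres.gen := Sum.elim f.toFun fun s => s.1.1

-- `Sum.inr ⟨(y, m), _⟩` is a letter lying over `y` and standing for `m`.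
abbrev obj : RPres :=
  ⟨⟨X.pres.gen ⊕ S, {uv | FreeMonoid.lift (θ S) uv.1 = FreeMonoid.lift (θ S) uv.2 ∧
    (FreeMonoid.map (q f S) uv.1, FreeMonoid.map (q f S) uv.2) ∈ Y.pres.rel}⟩,
    fun _ => ⟨rfl, Y.refl _⟩⟩

theorem of_mem_rel {z z' : X.pres.gen ⊕ S} (hθ : θ S z = θ S z') (hq : q f S z = q f S z') :
    (FreeMonoid.of z, FreeMonoid.of z') ∈ (obj f S).pres.rel :=
  ⟨hθ, by simpa only [FreeMonoid.map_of, hq] using Y.refl _⟩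

def π : obj f S ⟶ Y := ⟨q f S, fun _ h => h.2⟩

def θHom : (obj f S).pres.Presented →* X.pres.Presented :=
  Con.lift _ (FreeMonoid.lift (θ S)) (Con.conGen_le.2 fun _ _ h => h.1)

variable {f S} in
def homMk {B : RPres} (h : B.pres.gen → X.pres.gen ⊕ S) (Θ : B.pres.Presented →* X.pres.Presented)
    (g : B ⟶ Y) (hθ : ∀ b, θ S (h b) = Θ (Con.mk' _ (.of b))) (hq : ∀ b, q f S (h b) = g.toFun b) :
    B ⟶ obj f S where
  toFun := h
  map_rel uv huv := by
    have hlift : ∀ w, FreeMonoid.lift (θ S) (FreeMonoid.map h w) = Θ (Con.mk' _ w) := fun w =>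
      DFunLike.congr_fun (FreeMonoid.hom_eq (f := (FreeMonoid.lift (θ S)).comp (FreeMonoid.map h))
        (g := Θ.comp (Con.mk' _)) hθ) w
    refine ⟨?_, ?_⟩
    · simp only [hlift]
      exact congrArg Θ ((Con.eq _).2 (ConGen.Rel.of _ _ huv))
    · simpa only [FreeMonoid.map_map, show q f S ∘ h = g.toFun from funext hq]
        using g.map_rel uv huv

variable {f S} in
theorem homMk_π {B : RPres} (h : B.pres.gen → X.pres.gen ⊕ S) (Θ) (g : B ⟶ Y) (hθ) (hq) :
    homMk h Θ g hθ hq ≫ π f S = g :=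
  RPres.hom_ext hq

def ι : X ⟶ obj f S := homMk Sum.inl (MonoidHom.id _) f (fun _ => rfl) (fun _ => rfl)

theorem ι_π : ι f S ≫ π f S = f := rfl

theorem cofib_ι : Cofib (ι f S) := cofib_of_injective Sum.inl_injective

variable {S} in
def incl {S' : Set (Y.pres.gen × X.pres.Presented)} (h : S ⊆ S') : obj f S ⟶ obj f S' :=
  homMk (Sum.map id (Set.inclusion h)) (θHom f S) (π f S) (by rintro (_ | _) <;> rfl)
    (by rintro (_ | _) <;> rfl)

variable {S} in
theorem ι_incl {S' : Set (Y.pres.gen × X.pres.Presented)} (h : S ⊆ S') :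
    ι f S ≫ incl f h = ι f S' := rfl

variable {S} in
theorem θ_incl {S' : Set (Y.pres.gen × X.pres.Presented)} (h : S ⊆ S') (z : X.pres.gen ⊕ S) :
    θ S' ((incl f h).toFun z) = θ S z := by
  cases z <;> rfl

variable {S} in
theorem q_incl {S' : Set (Y.pres.gen × X.pres.Presented)} (h : S ⊆ S') (z : X.pres.gen ⊕ S) :
    q f S' ((incl f h).toFun z) = q f S z := by
  cases z <;> rfl

theorem injective_induced_ι : Function.Injective (MonPresHom.induced (ι f S)) := by
  have h : (θHom f S).comp (MonPresHom.induced (ι f S)) = MonoidHom.id _ := by ext; rfl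
  exact Function.LeftInverse.injective (g := θHom f S) (DFunLike.congr_fun h)

def Saturated : Prop := Function.Surjective (MonPresHom.induced (ι f S))

variable {f S}

theorem Saturated.induced_incl_mem_range {S' : Set (Y.pres.gen × X.pres.Presented)}
    (hS : Saturated f S) (h : S ⊆ S') (z : (obj f S).pres.Presented) :
    MonPresHom.induced (incl f h) z ∈ Set.range (MonPresHom.induced (ι f S')) := by
  obtain ⟨m, rfl⟩ := hS z
  exact ⟨m, by rw [← ι_incl f h, RPres.induced_comp]; rfl⟩

theorem saturated_of_forall (h : ∀ s : S,
    Con.mk' _ (.of (Sum.inr s)) ∈ Set.range (MonPresHom.induced (ι f S))) : Saturated f S :=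
  MonPres.surjective_of_forall_mem_range _ fun
    | .inl x => ⟨Con.mk' _ (.of x), rfl⟩
    | .inr s => h s

variable (f) in
def K : Set (Y.pres.gen × X.pres.Presented) := ⋃₀ {S | Saturated f S}

theorem Saturated.subset_K (hS : Saturated f S) : S ⊆ K f := Set.subset_sUnion_of_mem hS

variable (f) in
theorem saturated_K : Saturated f (K f) :=
  saturated_of_forall fun ⟨s, _, hT, hs⟩ =>
    hT.induced_incl_mem_range hT.subset_K (Con.mk' _ (.of (Sum.inr ⟨s, hs⟩)))

variable (f) in
theorem weq_ι : Weq (ι f (K f)) := ⟨injective_induced_ι f _, saturated_K f⟩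

section Lift

variable {A B : RPres} {i : A ⟶ B} (hi : Weq i) (a : A ⟶ obj f (K f)) (b : B ⟶ Y)

noncomputable def transport : B.pres.Presented →* X.pres.Presented :=
  (θHom f (K f)).comp
    ((MonPresHom.induced a).comp (MulEquiv.ofBijective (MonPresHom.induced i) hi).symm.toMonoidHom)

theorem transport_induced (m : A.pres.Presented) :
    transport hi a (MonPresHom.induced i m) = θHom f (K f) (MonPresHom.induced a m) := by
  simp only [transport, MonoidHom.comp_apply, MulEquiv.coe_toMonoidHom]
  rw [← MulEquiv.ofBijective_apply (f := MonPresHom.induced i) hi, MulEquiv.symm_apply_apply]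

noncomputable def newGen (y : B.pres.gen) : Y.pres.gen × X.pres.Presented :=
  (b.toFun y, transport hi a (Con.mk' _ (.of y)))

variable {hi a b} in
noncomputable def toObj {S : Set (Y.pres.gen × X.pres.Presented)} (hS : ∀ y, newGen hi a b y ∈ S) :
    B ⟶ obj f S :=
  homMk (fun y => .inr ⟨newGen hi a b y, hS y⟩) (transport hi a) b (fun _ => rfl) (fun _ => rfl)

theorem θ_apply_eq_transport (x : A.pres.gen) :
    θ (K f) (a.toFun x) = transport hi a (Con.mk' _ (.of (i.toFun x))) :=
  (transport_induced hi a (Con.mk' _ (.of x))).symm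

variable {a b} (w : a ≫ π f (K f) = i ≫ b)
include w

theorem q_apply_eq (x : A.pres.gen) : q f (K f) (a.toFun x) = b.toFun (i.toFun x) :=
  congrFun (congrArg MonPresHom.toFun w) x

theorem induced_comp_toObj {S : Set (Y.pres.gen × X.pres.Presented)} (h : K f ⊆ S)
    (hS : ∀ y, newGen hi a b y ∈ S) :
    MonPresHom.induced (i ≫ toObj hS) = MonPresHom.induced (a ≫ incl f h) := by
  ext x
  refine (Con.eq _).2 (ConGen.Rel.of _ _ (of_mem_rel f S ?_ ?_))
  · exact (θ_apply_eq_transport hi a x).symm.trans (θ_incl f h _).symm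
  · exact (q_apply_eq w x).symm.trans (q_incl f h _).symm

theorem newGen_mem_K (y : B.pres.gen) : newGen hi a b y ∈ K f := by
  have hsat : Saturated f (K f ∪ Set.range (newGen hi a b)) := saturated_of_forall fun ⟨s, hs⟩ => by
    rcases hs with hs | ⟨y, rfl⟩
    · exact (saturated_K f).induced_incl_mem_range Set.subset_union_left
        (Con.mk' _ (.of (Sum.inr ⟨s, hs⟩)))
    · have hS : ∀ y, newGen hi a b y ∈ K f ∪ Set.range (newGen hi a b) := fun y => Or.inr ⟨y, rfl⟩
      obtain ⟨m, hm⟩ := hi.2 (Con.mk' _ (.of y))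
      show MonPresHom.induced (toObj hS) (Con.mk' _ (.of y)) ∈ _
      rw [← hm, ← MonoidHom.comp_apply, ← RPres.induced_comp,
        induced_comp_toObj hi w Set.subset_union_left, RPres.induced_comp]
      exact (saturated_K f).induced_incl_mem_range _ _
  exact hsat.subset_K (Or.inr ⟨y, rfl⟩)

end Lift

variable (f) in
theorem fib_π : Fib (π f (K f)) := by
  intro A B i hc hw
  refine (hasLiftingProperty_iff _ _).2 fun a b w => ?_
  have hinj := hc.injective
  let e : B.pres.gen → X.pres.gen ⊕ K f := fun y => .inr ⟨newGen hw a b y, newGen_mem_K hw w y⟩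
  let l : B ⟶ obj f (K f) :=
    homMk (Function.extend i.toFun a.toFun e)
      (transport hw a) b
      (hinj.extend_induction (P := fun y z => θ (K f) z = transport hw a (Con.mk' _ (.of y)))
        (θ_apply_eq_transport hw a) fun _ => rfl)
      (hinj.extend_induction (P := fun y z => q f (K f) z = b.toFun y) (q_apply_eq w) fun _ => rfl)
  exact ⟨l, RPres.hom_ext fun x => hinj.extend_apply a.toFun e x, homMk_π _ _ _ _ _⟩

end Redundant

/-- there is a model category structure on the category of
reflexive presentations with `Weq` as weak equivalences, `llp(rlp(I))` as
cofibrations and the morphisms with the right lifting property with respect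
to trivial cofibrations as fibrations: the category is complete and
cocomplete, the weak equivalences satisfy 2-out-of-3, and
(cofibrations, trivial fibrations) and (trivial cofibrations, fibrations) are
weak factorization systems. -/
theorem stmt14 :
    Limits.HasLimits RPres ∧ Limits.HasColimits RPres ∧
    (∀ ⦃X Y Z : RPres⦄ (f : X ⟶ Y) (g : Y ⟶ Z), Weq f → Weq g → Weq (f ≫ g)) ∧
    (∀ ⦃X Y Z : RPres⦄ (f : X ⟶ Y) (g : Y ⟶ Z), Weq g → Weq (f ≫ g) → Weq f) ∧
    (∀ ⦃X Y Z : RPres⦄ (f : X ⟶ Y) (g : Y ⟶ Z), Weq f → Weq (f ≫ g) → Weq g) ∧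
    IsWFS Cofib (fun _ _ p => Fib p ∧ Weq p) ∧
    IsWFS (fun _ _ i => Cofib i ∧ Weq i) Fib := by
  refine ⟨inferInstance, inferInstance, fun _ _ _ _ _ => weq_comp,
    fun _ _ _ _ _ => weq_of_weq_comp_left, fun _ _ _ _ _ => weq_of_weq_comp_right,
    ⟨?_, ?_, ?_, ?_⟩, ⟨?_, ?_, ?_, ?_⟩⟩
  · exact fun _ _ _ _ i p hi hp => hi p ((fib_and_weq_iff_rlpI p).1 hp)
  · exact fun _ _ i h _ _ p hp => h p ((fib_and_weq_iff_rlpI p).2 hp)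
  · exact fun _ _ p h => (fib_and_weq_iff_rlpI p).2 fun _ _ i hi => h i hi.cofib
  · exact fun _ _ f => ⟨_, _, _, MappingCylinder.cofib_ι f,
      (fib_and_weq_iff_rlpI _).2 (MappingCylinder.rlpI_π f), MappingCylinder.ι_π f⟩
  · exact fun _ _ _ _ i p hi hp => hp i hi.1 hi.2
  · intro A B i h
    obtain ⟨l, hil, hlp⟩ := (hasLiftingProperty_iff _ _).1 (h _ (Redundant.fib_π i))
      (Redundant.ι i _) (𝟙 B) (Category.comp_id _).symm
    exact cofib_and_weq_of_retract hil hlp (Redundant.cofib_ι i _) (Redundant.weq_ι i)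
  · exact fun _ _ p h _ _ i hi hw => h i ⟨hi, hw⟩
  · exact fun _ _ f => ⟨_, _, _, ⟨Redundant.cofib_ι f _, Redundant.weq_ι f⟩,
      Redundant.fib_π f, Redundant.ι_π f _⟩
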